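/- Let G be a finite simple graph on vertex set V with n ≥ 1 vertices, and let s ≥ 2 be an integer. Suppose that (a) every set S ⊆ V with |S| ≤ s has at least t mutual non-neighbors, and (b) every vertex of G has at most D neighbors. Then for every partition of V into s nonempty classes W₁, …, W_s, there exists an index j such that every vertex v ∈ V \ W_j has at least max{⌈t/s⌉, |W_j| − D} non-neighbors in W_j. -/
import Mathlib


theorem exists_useful_class {V : Type*} [Fintype V] [DecidableEq V]
    (G : SimpleGraph V) [DecidableRel G.Adj] (s t D : ℕ)
    (hn : 1 ≤ Fintype.card V) (hs : 2 ≤ s)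
    (ha : ∀ S : Finset V, S.card ≤ s →
      t ≤ (Finset.univ.filter (fun u => u ∉ S ∧ ∀ w ∈ S, ¬ G.Adj u w)).card)
    (hb : ∀ v : V, G.degree v ≤ D) :
    ∀ W : Fin s → Finset V, (∀ i, (W i).Nonempty) →
      (∀ i j, i ≠ j → Disjoint (W i) (W j)) →
      Finset.univ.biUnion W = Finset.univ →
      ∃ j, ∀ v : V, v ∉ W j →
        max ((t + s - 1) / s) ((W j).card - D) ≤
          ((W j).filter (fun u => u ≠ v ∧ ¬ G.Adj u v)).card := by
  intro W hne hdisj hcover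
  -- the `card - D` bound holds for every class and every outside vertex
  have hlow : ∀ (j : Fin s) (v : V), v ∉ W j →
      (W j).card - D ≤ ((W j).filter (fun u => u ≠ v ∧ ¬ G.Adj u v)).card := by
    intro j v hv
    have hsplit := Finset.card_filter_add_card_filter_not
      (s := W j) (p := fun u => u ≠ v ∧ ¬ G.Adj u v)
    have hsub : (W j).filter (fun u => ¬(u ≠ v ∧ ¬ G.Adj u v)) ⊆ G.neighborFinset v := by
      intro u hu
      simp only [Finset.mem_filter, not_and, not_not, ne_eq] at hu
      rcases hu with ⟨huW, hu'⟩
      by_cases he : u = v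
      · exact absurd (he ▸ huW) hv
      · simpa [SimpleGraph.mem_neighborFinset] using (hu' he).symm
    have hc := Finset.card_le_card hsub
    have hdeg : (G.neighborFinset v).card = G.degree v := rfl
    have := hb v
    omega
  by_contra hcon
  push_neg at hcon
  choose v hv hlt using hcon
  set q := (t + s - 1) / s with hq
  have hcnt : ∀ j : Fin s,
      ((W j).filter (fun u => u ≠ v j ∧ ¬ G.Adj u (v j))).card < q := by
    intro j
    rcases lt_max_iff.mp (hlt j) with h | h
    · exact h
    · exact absurd (hlow j (v j) (hv j)) (not_le.mpr h)
  set S : Finset V := Finset.image v Finset.univ with hS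
  have hScard : S.card ≤ s := by
    calc S.card ≤ (Finset.univ : Finset (Fin s)).card := Finset.card_image_le
    _ = s := by simp
  have hM := ha S hScard
  set M := Finset.univ.filter (fun u => u ∉ S ∧ ∀ w ∈ S, ¬ G.Adj u w) with hMdef
  have hMsub : M ⊆ Finset.univ.biUnion
      (fun j => (W j).filter (fun u => u ≠ v j ∧ ¬ G.Adj u (v j))) := by
    intro u hu
    simp only [hMdef, Finset.mem_filter, Finset.mem_univ, true_and] at hu
    rcases hu with ⟨huS, hadj⟩
    have : u ∈ Finset.univ.biUnion W := by rw [hcover]; exact Finset.mem_univ u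
    rcases Finset.mem_biUnion.mp this with ⟨j, _, hj⟩
    refine Finset.mem_biUnion.mpr ⟨j, Finset.mem_univ j, Finset.mem_filter.mpr ⟨hj, ?_, ?_⟩⟩
    · intro he
      exact huS (he ▸ Finset.mem_image_of_mem v (Finset.mem_univ j))
    · exact hadj (v j) (Finset.mem_image_of_mem v (Finset.mem_univ j))
  have h1 : t ≤ s * (q - 1) := by
    calc t ≤ M.card := hM
    _ ≤ (Finset.univ.biUnion
        (fun j => (W j).filter (fun u => u ≠ v j ∧ ¬ G.Adj u (v j)))).card :=
      Finset.card_le_card hMsub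
    _ ≤ ∑ j : Fin s, ((W j).filter (fun u => u ≠ v j ∧ ¬ G.Adj u (v j))).card :=
      Finset.card_biUnion_le
    _ ≤ ∑ _j : Fin s, (q - 1) := Finset.sum_le_sum (fun j _ => by have := hcnt j; omega)
    _ = s * (q - 1) := by simp [Finset.sum_const, mul_comm]
  have h3 : 1 ≤ q := by
    have := hcnt ⟨0, by omega⟩
    omega
  have h4 : s * (q - 1) + s * 1 = s * q := by
    rw [← Nat.mul_add]; congr 1; omega
  have h2 : s * q ≤ t + s - 1 := by
    rw [hq, mul_comm]; exact Nat.div_mul_le_self _ _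
  omega
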